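/- arXiv:2605.18247 — 2 statements merged into one kernel-verified Lean document; each statement's English description precedes it below -/
import Mathlib

section
/- Let Ω ⊆ ℝ³ be open, and let ρ₁, ρ₂ : Ω × ℝ → ℝ be smooth and strictly positive, θ₁, θ₂ : Ω × ℝ → ℝ smooth, A : Ω × ℝ → ℝ³ a smooth vector field, B¹, B² : Ω × ℝ → ℝ smooth, and m, ħ, q constants with m, ħ > 0. Set φ = (θ₂ − θ₁)/ħ and suppose that ∂ₜρ₁ = −(1/m)·∇·(ρ₁(∇θ₁ − qA)) − (q·√(ρ₁ρ₂)/m)·(B¹ sin φ − B² cos φ) and ∂ₜρ₂ = −(1/m)·∇·(ρ₂(∇θ₂ − qA)) + (q·√(ρ₁ρ₂)/m)·(B¹ sin φ − B² cos φ) on Ω × ℝ. Then the total density ρ = ρ₁ + ρ₂ and the velocity field u = (ρ₁∇θ₁ + ρ₂∇θ₂)/(m·ρ) − (q/m)·A satisfy the continuity equation ∂ₜρ + ∇·(ρ·u) = 0 on Ω × ℝ. -/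
/-
Adding the two evolution equations cancels the spin-coupling terms, so `∂ₜρ` is
`-(1/m) ∇·(j₁ + j₂)` with `jₖ = ρₖ(∇θₖ - qA)`. On the other hand `ρu = (j₁ + j₂)/m`
pointwise wherever `ρ > 0`, hence on a neighbourhood of every point of `Ω`, and the
divergence only sees the field near the point.
-/

open Real

noncomputable section

/-- Space-time point: a point of ℝ³ together with a time. -/
abbrev P3 := (Fin 3 → ℝ) × ℝ

/-- Spatial partial derivative in the `i`-th coordinate direction. -/
noncomputable def pdx (i : Fin 3) (f : P3 → ℝ) (p : P3) : ℝ :=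
  fderiv ℝ (fun x => f (x, p.2)) p.1 (Pi.single i 1)

/-- Time derivative. -/
noncomputable def pdt (f : P3 → ℝ) (p : P3) : ℝ :=
  deriv (fun t => f (p.1, t)) p.2

/-- Spatial divergence of a time-dependent vector field. -/
noncomputable def divx (v : P3 → Fin 3 → ℝ) (p : P3) : ℝ :=
  ∑ i, pdx i (fun y => v y i) p

open Filter Topology

section Slices

variable {E : Type*} [NormedAddCommGroup E] [NormedSpace ℝ E] {n : WithTop ℕ∞}
  {Ω : Set (Fin 3 → ℝ)} {f : P3 → E} {x : Fin 3 → ℝ}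

theorem ContDiffOn.contDiffAt_of_mem_prod_univ (hf : ContDiffOn ℝ n f (Ω ×ˢ Set.univ))
    (hΩ : IsOpen Ω) (hx : x ∈ Ω) (t : ℝ) : ContDiffAt ℝ n f (x, t) :=
  hf.contDiffAt ((hΩ.prod isOpen_univ).mem_nhds ⟨hx, trivial⟩)

theorem ContDiffAt.comp_prodMk_right {t : ℝ} (hf : ContDiffAt ℝ n f (x, t)) :
    ContDiffAt ℝ n (fun y => f (y, t)) x :=
  hf.comp x (contDiff_id.prodMk contDiff_const).contDiffAt

theorem ContDiffAt.comp_prodMk_left {t : ℝ} (hf : ContDiffAt ℝ n f (x, t)) :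
    ContDiffAt ℝ n (fun s => f (x, s)) t :=
  hf.comp t (contDiff_const.prodMk contDiff_id).contDiffAt

end Slices

section SpatialCalculus

variable {f g : P3 → ℝ} {p : P3}

theorem differentiableAt_pdx {n : WithTop ℕ∞} (hn : 2 ≤ n) {x : Fin 3 → ℝ} {t : ℝ}
    (hf : ContDiffAt ℝ n (fun y => f (y, t)) x) (i : Fin 3) :
    DifferentiableAt ℝ (fun y => pdx i f (y, t)) x :=
  ((hf.fderiv_right (by simpa [one_add_one_eq_two] using hn)).clm_apply
    contDiffAt_const).differentiableAt one_ne_zero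

theorem pdx_congr_of_eventuallyEq (i : Fin 3)
    (h : ∀ᶠ x in 𝓝 p.1, f (x, p.2) = g (x, p.2)) : pdx i f p = pdx i g p := by
  rw [pdx, pdx, EventuallyEq.fderiv_eq h]

theorem pdx_add (i : Fin 3) (hf : DifferentiableAt ℝ (fun x => f (x, p.2)) p.1)
    (hg : DifferentiableAt ℝ (fun x => g (x, p.2)) p.1) :
    pdx i (fun q => f q + g q) p = pdx i f p + pdx i g p := by
  simp only [pdx, fderiv_fun_add hf hg, add_apply]

theorem pdx_const_mul (i : Fin 3) (c : ℝ) (hf : DifferentiableAt ℝ (fun x => f (x, p.2)) p.1) :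
    pdx i (fun q => c * f q) p = c * pdx i f p := by
  simp only [pdx, fderiv_const_mul hf, smul_apply, smul_eq_mul]

variable {v w : P3 → Fin 3 → ℝ}

theorem divx_congr_of_eventuallyEq (h : ∀ᶠ x in 𝓝 p.1, v (x, p.2) = w (x, p.2)) :
    divx v p = divx w p :=
  Finset.sum_congr rfl fun i _ =>
    pdx_congr_of_eventuallyEq i (h.mono fun _ hx => congrFun hx i)

theorem divx_add (hv : ∀ i, DifferentiableAt ℝ (fun x => v (x, p.2) i) p.1)
    (hw : ∀ i, DifferentiableAt ℝ (fun x => w (x, p.2) i) p.1) :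
    divx (fun q i => v q i + w q i) p = divx v p + divx w p := by
  simp only [divx, ← Finset.sum_add_distrib]
  exact Finset.sum_congr rfl fun i _ => pdx_add i (hv i) (hw i)

theorem divx_const_mul (c : ℝ) (hv : ∀ i, DifferentiableAt ℝ (fun x => v (x, p.2) i) p.1) :
    divx (fun q i => c * v q i) p = c * divx v p := by
  simp only [divx, Finset.mul_sum]
  exact Finset.sum_congr rfl fun i _ => pdx_const_mul i c (hv i)

end SpatialCalculus

theorem differentiableAt_flux {Ω : Set (Fin 3 → ℝ)} (hΩ : IsOpen Ω) {n : WithTop ℕ∞}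
    (hn : 2 ≤ n) {σ θ : P3 → ℝ} {A : P3 → Fin 3 → ℝ} (hσ : ContDiffOn ℝ n σ (Ω ×ˢ Set.univ))
    (hθ : ContDiffOn ℝ n θ (Ω ×ˢ Set.univ)) (hA : ContDiffOn ℝ n A (Ω ×ˢ Set.univ))
    {x : Fin 3 → ℝ} (hx : x ∈ Ω) (t q : ℝ) (i : Fin 3) :
    DifferentiableAt ℝ (fun y => σ (y, t) * (pdx i θ (y, t) - q * A (y, t) i)) x := by
  have hn0 : n ≠ 0 := by rintro rfl; norm_num at hn
  have hσx := (hσ.contDiffAt_of_mem_prod_univ hΩ hx t).comp_prodMk_right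
  have hθx := (hθ.contDiffAt_of_mem_prod_univ hΩ hx t).comp_prodMk_right
  have hAx := contDiffAt_pi.1 (hA.contDiffAt_of_mem_prod_univ hΩ hx t).comp_prodMk_right i
  exact (hσx.differentiableAt hn0).mul
    ((differentiableAt_pdx hn hθx i).sub ((hAx.differentiableAt hn0).const_mul q))

theorem pdt_add {f g : P3 → ℝ} {p : P3} (hf : DifferentiableAt ℝ (fun t => f (p.1, t)) p.2)
    (hg : DifferentiableAt ℝ (fun t => g (p.1, t)) p.2) :
    pdt (fun q => f q + g q) p = pdt f p + pdt g p :=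
  deriv_fun_add hf hg

theorem total_flux_eq (ρ₁ ρ₂ g₁ g₂ a m q : ℝ) (hρ : ρ₁ + ρ₂ ≠ 0) :
    (ρ₁ + ρ₂) * ((ρ₁ * g₁ + ρ₂ * g₂) / (m * (ρ₁ + ρ₂)) - q / m * a)
      = 1 / m * (ρ₁ * (g₁ - q * a)) + 1 / m * (ρ₂ * (g₂ - q * a)) := by
  rcases eq_or_ne m 0 with rfl | hm
  · simp
  · field_simp
    ring

theorem pauli_continuity_general
    (Ω : Set (Fin 3 → ℝ)) (hΩ : IsOpen Ω)
    (ρ₁ ρ₂ θ₁ θ₂ : P3 → ℝ) (A : P3 → Fin 3 → ℝ) (B1 B2 : P3 → ℝ)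
    (m q : ℝ)
    (hρ₁s : ContDiffOn ℝ (⊤ : ℕ∞) ρ₁ (Ω ×ˢ Set.univ))
    (hρ₂s : ContDiffOn ℝ (⊤ : ℕ∞) ρ₂ (Ω ×ˢ Set.univ))
    (hθ₁s : ContDiffOn ℝ (⊤ : ℕ∞) θ₁ (Ω ×ˢ Set.univ))
    (hθ₂s : ContDiffOn ℝ (⊤ : ℕ∞) θ₂ (Ω ×ˢ Set.univ))
    (hAs : ContDiffOn ℝ (⊤ : ℕ∞) A (Ω ×ˢ Set.univ))
    (hρ₁pos : ∀ p ∈ Ω ×ˢ (Set.univ : Set ℝ), 0 < ρ₁ p)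
    (hρ₂pos : ∀ p ∈ Ω ×ˢ (Set.univ : Set ℝ), 0 < ρ₂ p)
    (φ : P3 → ℝ)
    (h1 : ∀ p ∈ Ω ×ˢ (Set.univ : Set ℝ),
      pdt ρ₁ p = -(1 / m) * divx (fun y i => ρ₁ y * (pdx i θ₁ y - q * A y i)) p
        - q * Real.sqrt (ρ₁ p * ρ₂ p) / m
          * (B1 p * Real.sin (φ p) - B2 p * Real.cos (φ p)))
    (h2 : ∀ p ∈ Ω ×ˢ (Set.univ : Set ℝ),
      pdt ρ₂ p = -(1 / m) * divx (fun y i => ρ₂ y * (pdx i θ₂ y - q * A y i)) p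
        + q * Real.sqrt (ρ₁ p * ρ₂ p) / m
          * (B1 p * Real.sin (φ p) - B2 p * Real.cos (φ p)))
    (ρ : P3 → ℝ) (hρ : ρ = fun p => ρ₁ p + ρ₂ p)
    (u : P3 → Fin 3 → ℝ)
    (hu : u = fun p i =>
      (ρ₁ p * pdx i θ₁ p + ρ₂ p * pdx i θ₂ p) / (m * ρ p) - q / m * A p i) :
    ∀ p ∈ Ω ×ˢ (Set.univ : Set ℝ),
      pdt ρ p + divx (fun y i => ρ y * u y i) p = 0 := by
  rintro ⟨x, t⟩ ⟨hx, -⟩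
  have hn : (2 : WithTop ℕ∞) ≤ (⊤ : ℕ∞) := WithTop.coe_le_coe.2 le_top
  set v₁ : P3 → Fin 3 → ℝ := fun y i => ρ₁ y * (pdx i θ₁ y - q * A y i)
  set v₂ : P3 → Fin 3 → ℝ := fun y i => ρ₂ y * (pdx i θ₂ y - q * A y i)
  have hv₁ := differentiableAt_flux hΩ hn hρ₁s hθ₁s hAs hx t q
  have hv₂ := differentiableAt_flux hΩ hn hρ₂s hθ₂s hAs hx t q
  have hflux : ∀ᶠ y in 𝓝 x,
      (fun i => ρ (y, t) * u (y, t) i) = fun i => 1 / m * v₁ (y, t) i + 1 / m * v₂ (y, t) i := by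
    filter_upwards [hΩ.mem_nhds hx] with y hy
    funext i
    subst hρ hu
    exact total_flux_eq _ _ _ _ _ _ _
      (add_pos (hρ₁pos _ ⟨hy, trivial⟩) (hρ₂pos _ ⟨hy, trivial⟩)).ne'
  have hdiv : divx (fun y i => ρ y * u y i) (x, t)
      = 1 / m * divx v₁ (x, t) + 1 / m * divx v₂ (x, t) := calc
    _ = divx (fun y i => 1 / m * v₁ y i + 1 / m * v₂ y i) (x, t) :=
      divx_congr_of_eventuallyEq hflux
    _ = _ := by
      rw [divx_add (fun i => (hv₁ i).const_mul _) (fun i => (hv₂ i).const_mul _),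
        divx_const_mul _ hv₁, divx_const_mul _ hv₂]
  have hpdt : pdt ρ (x, t) = pdt ρ₁ (x, t) + pdt ρ₂ (x, t) := by
    have hρ₁t := (hρ₁s.contDiffAt_of_mem_prod_univ hΩ hx t).comp_prodMk_left
    have hρ₂t := (hρ₂s.contDiffAt_of_mem_prod_univ hΩ hx t).comp_prodMk_left
    subst hρ
    exact pdt_add (hρ₁t.differentiableAt (by simp)) (hρ₂t.differentiableAt (by simp))
  rw [hpdt, hdiv, h1 _ ⟨hx, trivial⟩, h2 _ ⟨hx, trivial⟩]
  ring

/-- **Continuity equation for the total density of the hydrodynamic Pauli system.**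
If the polar components `ρ₁, ρ₂` of the spinor satisfy the two imaginary-part
equations of the Pauli equation, then the total density `ρ = ρ₁ + ρ₂` and the velocity
`u = (ρ₁∇θ₁ + ρ₂∇θ₂)/(mρ) - (q/m)A` satisfy `∂ₜρ + ∇·(ρu) = 0`. -/
theorem pauli_continuity
    (Ω : Set (Fin 3 → ℝ)) (hΩ : IsOpen Ω)
    (ρ₁ ρ₂ θ₁ θ₂ : P3 → ℝ) (A : P3 → Fin 3 → ℝ) (B1 B2 : P3 → ℝ)
    (m hbar q : ℝ) (hm : 0 < m) (hhbar : 0 < hbar)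
    (hρ₁s : ContDiffOn ℝ (⊤ : ℕ∞) ρ₁ (Ω ×ˢ Set.univ))
    (hρ₂s : ContDiffOn ℝ (⊤ : ℕ∞) ρ₂ (Ω ×ˢ Set.univ))
    (hθ₁s : ContDiffOn ℝ (⊤ : ℕ∞) θ₁ (Ω ×ˢ Set.univ))
    (hθ₂s : ContDiffOn ℝ (⊤ : ℕ∞) θ₂ (Ω ×ˢ Set.univ))
    (hAs : ContDiffOn ℝ (⊤ : ℕ∞) A (Ω ×ˢ Set.univ))
    (hB1s : ContDiffOn ℝ (⊤ : ℕ∞) B1 (Ω ×ˢ Set.univ))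
    (hB2s : ContDiffOn ℝ (⊤ : ℕ∞) B2 (Ω ×ˢ Set.univ))
    (hρ₁pos : ∀ p ∈ Ω ×ˢ (Set.univ : Set ℝ), 0 < ρ₁ p)
    (hρ₂pos : ∀ p ∈ Ω ×ˢ (Set.univ : Set ℝ), 0 < ρ₂ p)
    (φ : P3 → ℝ) (hφ : φ = fun p => (θ₂ p - θ₁ p) / hbar)
    (h1 : ∀ p ∈ Ω ×ˢ (Set.univ : Set ℝ),
      pdt ρ₁ p = -(1 / m) * divx (fun y i => ρ₁ y * (pdx i θ₁ y - q * A y i)) p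
        - q * Real.sqrt (ρ₁ p * ρ₂ p) / m
          * (B1 p * Real.sin (φ p) - B2 p * Real.cos (φ p)))
    (h2 : ∀ p ∈ Ω ×ˢ (Set.univ : Set ℝ),
      pdt ρ₂ p = -(1 / m) * divx (fun y i => ρ₂ y * (pdx i θ₂ y - q * A y i)) p
        + q * Real.sqrt (ρ₁ p * ρ₂ p) / m
          * (B1 p * Real.sin (φ p) - B2 p * Real.cos (φ p)))
    (ρ : P3 → ℝ) (hρ : ρ = fun p => ρ₁ p + ρ₂ p)
    (u : P3 → Fin 3 → ℝ)
    (hu : u = fun p i =>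
      (ρ₁ p * pdx i θ₁ p + ρ₂ p * pdx i θ₂ p) / (m * ρ p) - q / m * A p i) :
    ∀ p ∈ Ω ×ˢ (Set.univ : Set ℝ),
      pdt ρ p + divx (fun y i => ρ y * u y i) p = 0 :=
  pauli_continuity_general Ω hΩ ρ₁ ρ₂ θ₁ θ₂ A B1 B2 m q hρ₁s hρ₂s hθ₁s hθ₂s hAs hρ₁pos hρ₂pos φ h1
    h2 ρ hρ u hu

end
end

section
/- Let Ω ⊆ ℝ³ be open, and let ρ : Ω → ℝ be smooth with ρ > 0 and η : Ω → ℝ smooth with values in (0, π). Set ρ₁ = ρ·cos²(η/2) and ρ₂ = ρ·sin²(η/2). Then √ρ₁·Δ√ρ₁ + √ρ₂·Δ√ρ₂ = √ρ·Δ√ρ − (ρ/4)·|∇η|² on Ω. Equivalently, with the quantum potentials V_{qi} = −(ħ²/2m)·Δ√ρᵢ/√ρᵢ (i = 1, 2, ħ, m > 0), one has ρ₁·V_{q1} + ρ₂·V_{q2} = −(ħ²/2m)·√ρ·Δ√ρ + (ħ²/8m)·ρ·|∇η|². -/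
/-!
Write `√ρ₁ = a u` and `√ρ₂ = a v` with `a = √ρ`, `u = cos (η/2)`, `v = sin (η/2)`. For any pair
with `u² + v² = 1`, differentiating this once and twice gives `u ∇u + v ∇v = 0` and
`u Δu + v Δv = -(|∇u|² + |∇v|²)`, so the product rule `Δ(a u) = u Δa + 2 ∇a·∇u + a Δu` yields
`a u Δ(a u) + a v Δ(a v) = a Δa - a² (|∇u|² + |∇v|²)`. For the half-angle pair
`|∇u|² + |∇v|² = |∇η|²/4`. The second identity is the first multiplied by `-ħ²/2m`, since
`ρᵢ / √ρᵢ = √ρᵢ`.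
-/

open Real

noncomputable section

/-- Partial derivative of a scalar function on ℝ³ in the `i`-th coordinate direction. -/
noncomputable def pd (i : Fin 3) (f : (Fin 3 → ℝ) → ℝ) (x : Fin 3 → ℝ) : ℝ :=
  fderiv ℝ f x (Pi.single i 1)

/-- Euclidean Laplacian of a scalar function on ℝ³. -/
noncomputable def lap (f : (Fin 3 → ℝ) → ℝ) (x : Fin 3 → ℝ) : ℝ :=
  ∑ i, pd i (fun y => pd i f y) x

open Filter Topology Finset

section Calculus

variable {f g : (Fin 3 → ℝ) → ℝ} {x : Fin 3 → ℝ}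

theorem Filter.EventuallyEq.pd_eq (h : f =ᶠ[𝓝 x] g) (i : Fin 3) : pd i f x = pd i g x := by
  rw [pd, pd, h.fderiv_eq]

protected theorem Filter.EventuallyEq.pd (h : f =ᶠ[𝓝 x] g) (i : Fin 3) :
    (fun y => pd i f y) =ᶠ[𝓝 x] fun y => pd i g y :=
  h.eventuallyEq_nhds.mono fun _ hy => hy.pd_eq i

theorem Filter.EventuallyEq.lap_eq (h : f =ᶠ[𝓝 x] g) : lap f x = lap g x :=
  sum_congr rfl fun i _ => (h.pd i).pd_eq i

theorem pd_const (c : ℝ) (i : Fin 3) : pd i (fun _ => c) x = 0 := by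
  simp [pd]

theorem lap_const (c : ℝ) : lap (fun _ => c) x = 0 := by
  simp [lap, pd_const]

theorem pd_add (hf : DifferentiableAt ℝ f x) (hg : DifferentiableAt ℝ g x) (i : Fin 3) :
    pd i (fun y => f y + g y) x = pd i f x + pd i g x := by
  simp [pd, fderiv_fun_add hf hg]

theorem pd_mul (hf : DifferentiableAt ℝ f x) (hg : DifferentiableAt ℝ g x) (i : Fin 3) :
    pd i (fun y => f y * g y) x = pd i f x * g x + f x * pd i g x := by
  simp [pd, fderiv_fun_mul hf hg]
  ring

theorem pd_comp {φ : ℝ → ℝ} {φ' : ℝ} (hφ : HasDerivAt φ φ' (f x))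
    (hf : DifferentiableAt ℝ f x) (i : Fin 3) :
    pd i (fun y => φ (f y)) x = φ' * pd i f x := by
  rw [pd, pd, show (fun y => φ (f y)) = φ ∘ f from rfl,
    (hφ.comp_hasFDerivAt x hf.hasFDerivAt).fderiv]
  simp

theorem ContDiffAt.eventually_differentiableAt (hf : ContDiffAt ℝ 2 f x) :
    ∀ᶠ y in 𝓝 x, DifferentiableAt ℝ f y :=
  (hf.eventually (by simp)).mono fun _ hy => hy.differentiableAt two_ne_zero

theorem ContDiffAt.differentiableAt_pd (hf : ContDiffAt ℝ 2 f x) (i : Fin 3) :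
    DifferentiableAt ℝ (fun y => pd i f y) x :=
  ((hf.fderiv_right (m := 1) (by norm_num)).clm_apply contDiffAt_const).differentiableAt
    one_ne_zero

theorem lap_add (hf : ContDiffAt ℝ 2 f x) (hg : ContDiffAt ℝ 2 g x) :
    lap (fun y => f y + g y) x = lap f x + lap g x := by
  rw [lap, lap, lap, ← sum_add_distrib]
  refine sum_congr rfl fun i _ => ?_
  have hpd : (fun y => pd i (fun z => f z + g z) y) =ᶠ[𝓝 x] fun y => pd i f y + pd i g y :=
    (hf.eventually_differentiableAt.and hg.eventually_differentiableAt).mono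
      fun _ hy => pd_add hy.1 hy.2 i
  rw [hpd.pd_eq, pd_add (hf.differentiableAt_pd i) (hg.differentiableAt_pd i)]

theorem lap_mul (hf : ContDiffAt ℝ 2 f x) (hg : ContDiffAt ℝ 2 g x) :
    lap (fun y => f y * g y) x
      = lap f x * g x + 2 * ∑ i, pd i f x * pd i g x + f x * lap g x := by
  have hterm : ∀ i, pd i (fun y => pd i (fun z => f z * g z) y) x
      = pd i (fun y => pd i f y) x * g x + 2 * (pd i f x * pd i g x)
        + f x * pd i (fun y => pd i g y) x := by
    intro i
    have hpd : (fun y => pd i (fun z => f z * g z) y)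
        =ᶠ[𝓝 x] fun y => pd i f y * g y + f y * pd i g y :=
      (hf.eventually_differentiableAt.and hg.eventually_differentiableAt).mono
        fun _ hy => pd_mul hy.1 hy.2 i
    have hf1 := hf.differentiableAt two_ne_zero
    have hg1 := hg.differentiableAt two_ne_zero
    rw [hpd.pd_eq,
      pd_add ((hf.differentiableAt_pd i).fun_mul hg1) (hf1.fun_mul (hg.differentiableAt_pd i)),
      pd_mul (hf.differentiableAt_pd i) hg1, pd_mul hf1 (hg.differentiableAt_pd i)]
    ring
  simp only [lap, hterm, sum_add_distrib, sum_mul, mul_sum]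

end Calculus

section UnitPair

variable {u v a : (Fin 3 → ℝ) → ℝ} {x : Fin 3 → ℝ}

theorem mul_pd_add_mul_pd_eq_zero (hu : ContDiffAt ℝ 2 u x) (hv : ContDiffAt ℝ 2 v x)
    (huv : ∀ᶠ y in 𝓝 x, u y ^ 2 + v y ^ 2 = 1) (i : Fin 3) :
    u x * pd i u x + v x * pd i v x = 0 := by
  have hu1 := hu.differentiableAt two_ne_zero
  have hv1 := hv.differentiableAt two_ne_zero
  have hconst : (fun y => u y * u y + v y * v y) =ᶠ[𝓝 x] fun _ => 1 :=
    huv.mono fun y hy => by linear_combination hy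
  have h := hconst.pd_eq i
  rw [pd_add (hu1.fun_mul hu1) (hv1.fun_mul hv1), pd_mul hu1 hu1, pd_mul hv1 hv1, pd_const] at h
  linear_combination h / 2

theorem mul_lap_add_mul_lap_eq (hu : ContDiffAt ℝ 2 u x) (hv : ContDiffAt ℝ 2 v x)
    (huv : ∀ᶠ y in 𝓝 x, u y ^ 2 + v y ^ 2 = 1) :
    u x * lap u x + v x * lap v x = -∑ i, (pd i u x ^ 2 + pd i v x ^ 2) := by
  have hconst : (fun y => u y * u y + v y * v y) =ᶠ[𝓝 x] fun _ => 1 :=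
    huv.mono fun y hy => by linear_combination hy
  have h := hconst.lap_eq
  rw [lap_add (hu.mul hu) (hv.mul hv), lap_mul hu hu, lap_mul hv hv, lap_const] at h
  simp only [sum_add_distrib, sq]
  linear_combination h / 2

theorem mul_lap_mul_add_mul_lap_mul (ha : ContDiffAt ℝ 2 a x) (hu : ContDiffAt ℝ 2 u x)
    (hv : ContDiffAt ℝ 2 v x) (huv : ∀ᶠ y in 𝓝 x, u y ^ 2 + v y ^ 2 = 1) :
    a x * u x * lap (fun y => a y * u y) x + a x * v x * lap (fun y => a y * v y) x
      = a x * lap a x - a x ^ 2 * ∑ i, (pd i u x ^ 2 + pd i v x ^ 2) := by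
  have hcross : u x * ∑ i, pd i a x * pd i u x + v x * ∑ i, pd i a x * pd i v x = 0 := by
    rw [mul_sum, mul_sum, ← sum_add_distrib]
    exact sum_eq_zero fun i _ => by
      linear_combination pd i a x * mul_pd_add_mul_pd_eq_zero hu hv huv i
  rw [lap_mul ha hu, lap_mul ha hv]
  linear_combination a x * lap a x * huv.self_of_nhds + 2 * a x * hcross
    + a x ^ 2 * mul_lap_add_mul_lap_eq hu hv huv

end UnitPair

theorem sum_pd_cos_half_sq_add_pd_sin_half_sq {η : (Fin 3 → ℝ) → ℝ} {x : Fin 3 → ℝ}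
    (hη : DifferentiableAt ℝ η x) :
    ∑ i, (pd i (fun y => cos (η y / 2)) x ^ 2 + pd i (fun y => sin (η y / 2)) x ^ 2)
      = ∑ i, pd i η x ^ 2 / 4 := by
  refine sum_congr rfl fun i _ => ?_
  rw [pd_comp (((hasDerivAt_id' _).div_const 2).cos) hη,
    pd_comp (((hasDerivAt_id' _).div_const 2).sin) hη]
  linear_combination pd i η x ^ 2 / 4 * cos_sq_add_sin_sq (η x / 2)

theorem mul_mul_div_sqrt (r c l : ℝ) : r * (c * l / √r) = c * (√r * l) := by
  calc r * (c * l / √r) = c * l * (r / √r) := by ring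
    _ = c * (√r * l) := by rw [div_sqrt]; ring

theorem cos_half_pos {θ : ℝ} (h₁ : -π < θ) (h₂ : θ < π) : 0 < cos (θ / 2) :=
  cos_pos_of_mem_Ioo ⟨by linarith, by linarith⟩

theorem sin_half_pos {θ : ℝ} (h₁ : 0 < θ) (h₂ : θ < 2 * π) : 0 < sin (θ / 2) :=
  sin_pos_of_pos_of_lt_pi (by linarith) (by linarith)

theorem sqrt_mul_sq {r c : ℝ} (hr : 0 ≤ r) (hc : 0 ≤ c) : √(r * c ^ 2) = √r * c := by
  rw [sqrt_mul hr, sqrt_sq hc]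

theorem quantum_potential_sum_general
    (Ω : Set (Fin 3 → ℝ)) (hΩ : IsOpen Ω)
    (ρ η : (Fin 3 → ℝ) → ℝ)
    (hρ : ContDiffOn ℝ (⊤ : ℕ∞) ρ Ω) (hρpos : ∀ x ∈ Ω, 0 < ρ x)
    (hη : ContDiffOn ℝ (⊤ : ℕ∞) η Ω) (hηval : ∀ x ∈ Ω, η x ∈ Set.Ioo 0 π)
    (hbar m : ℝ)
    (ρ₁ ρ₂ : (Fin 3 → ℝ) → ℝ)
    (hρ₁ : ρ₁ = fun y => ρ y * Real.cos (η y / 2) ^ 2)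
    (hρ₂ : ρ₂ = fun y => ρ y * Real.sin (η y / 2) ^ 2) :
    ∀ x ∈ Ω,
      (Real.sqrt (ρ₁ x) * lap (fun y => Real.sqrt (ρ₁ y)) x
          + Real.sqrt (ρ₂ x) * lap (fun y => Real.sqrt (ρ₂ y)) x
        = Real.sqrt (ρ x) * lap (fun y => Real.sqrt (ρ y)) x
          - ρ x / 4 * ∑ i, (pd i η x) ^ 2) ∧
      (ρ₁ x * (-(hbar ^ 2 / (2 * m)) * lap (fun y => Real.sqrt (ρ₁ y)) x
            / Real.sqrt (ρ₁ x))
          + ρ₂ x * (-(hbar ^ 2 / (2 * m)) * lap (fun y => Real.sqrt (ρ₂ y)) x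
            / Real.sqrt (ρ₂ x))
        = -(hbar ^ 2 / (2 * m)) * Real.sqrt (ρ x) * lap (fun y => Real.sqrt (ρ y)) x
          + hbar ^ 2 / (8 * m) * ρ x * ∑ i, (pd i η x) ^ 2) := by
  intro x hx
  have hΩx : Ω ∈ 𝓝 x := hΩ.mem_nhds hx
  have hρ2 : ContDiffAt ℝ 2 ρ x := (hρ.contDiffAt hΩx).of_le (WithTop.coe_le_coe.2 le_top)
  have hη2 : ContDiffAt ℝ 2 η x := (hη.contDiffAt hΩx).of_le (WithTop.coe_le_coe.2 le_top)
  have hsqrt : ContDiffAt ℝ 2 (fun y => √(ρ y)) x :=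
    (contDiffAt_sqrt (hρpos x hx).ne').comp x hρ2
  have hcos : ContDiffAt ℝ 2 (fun y => cos (η y / 2)) x :=
    contDiff_cos.contDiffAt.comp x (hη2.div_const 2)
  have hsin : ContDiffAt ℝ 2 (fun y => sin (η y / 2)) x :=
    contDiff_sin.contDiffAt.comp x (hη2.div_const 2)
  have hsqrt₁ : (fun y => √(ρ₁ y)) =ᶠ[𝓝 x] fun y => √(ρ y) * cos (η y / 2) :=
    eventually_of_mem hΩx fun y hy => by
      simp only [hρ₁]
      exact sqrt_mul_sq (hρpos y hy).le
        (cos_half_pos (by linarith [(hηval y hy).1, pi_pos]) (hηval y hy).2).le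
  have hsqrt₂ : (fun y => √(ρ₂ y)) =ᶠ[𝓝 x] fun y => √(ρ y) * sin (η y / 2) :=
    eventually_of_mem hΩx fun y hy => by
      simp only [hρ₂]
      exact sqrt_mul_sq (hρpos y hy).le
        (sin_half_pos (hηval y hy).1 (by linarith [(hηval y hy).2, pi_pos])).le
  have hsum : √(ρ₁ x) * lap (fun y => √(ρ₁ y)) x + √(ρ₂ x) * lap (fun y => √(ρ₂ y)) x
      = √(ρ x) * lap (fun y => √(ρ y)) x - ρ x / 4 * ∑ i, pd i η x ^ 2 := by
    rw [hsqrt₁.lap_eq, hsqrt₂.lap_eq, show √(ρ₁ x) = _ from hsqrt₁.self_of_nhds,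
      show √(ρ₂ x) = _ from hsqrt₂.self_of_nhds,
      mul_lap_mul_add_mul_lap_mul hsqrt hcos hsin (.of_forall fun y => cos_sq_add_sin_sq _),
      sum_pd_cos_half_sq_add_pd_sin_half_sq (hη2.differentiableAt two_ne_zero),
      sq_sqrt (hρpos x hx).le, ← sum_div]
    ring
  refine ⟨hsum, ?_⟩
  rw [mul_mul_div_sqrt, mul_mul_div_sqrt, ← mul_add, hsum]
  ring

/-- **Sum of the two quantum potentials.**
With `ρ₁ = ρ cos²(η/2)` and `ρ₂ = ρ sin²(η/2)` one has, on Ω,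
`√ρ₁ Δ√ρ₁ + √ρ₂ Δ√ρ₂ = √ρ Δ√ρ - (ρ/4)|∇η|²`, and equivalently, with
`V_{qi} = -(ħ²/2m) Δ√ρᵢ/√ρᵢ`,
`ρ₁ V_{q1} + ρ₂ V_{q2} = -(ħ²/2m)√ρ Δ√ρ + (ħ²/8m) ρ |∇η|²`. -/
theorem quantum_potential_sum
    (Ω : Set (Fin 3 → ℝ)) (hΩ : IsOpen Ω)
    (ρ η : (Fin 3 → ℝ) → ℝ)
    (hρ : ContDiffOn ℝ (⊤ : ℕ∞) ρ Ω) (hρpos : ∀ x ∈ Ω, 0 < ρ x)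
    (hη : ContDiffOn ℝ (⊤ : ℕ∞) η Ω) (hηval : ∀ x ∈ Ω, η x ∈ Set.Ioo 0 π)
    (hbar m : ℝ) (hhbar : 0 < hbar) (hm : 0 < m)
    (ρ₁ ρ₂ : (Fin 3 → ℝ) → ℝ)
    (hρ₁ : ρ₁ = fun y => ρ y * Real.cos (η y / 2) ^ 2)
    (hρ₂ : ρ₂ = fun y => ρ y * Real.sin (η y / 2) ^ 2) :
    ∀ x ∈ Ω,
      (Real.sqrt (ρ₁ x) * lap (fun y => Real.sqrt (ρ₁ y)) x
          + Real.sqrt (ρ₂ x) * lap (fun y => Real.sqrt (ρ₂ y)) x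
        = Real.sqrt (ρ x) * lap (fun y => Real.sqrt (ρ y)) x
          - ρ x / 4 * ∑ i, (pd i η x) ^ 2) ∧
      (ρ₁ x * (-(hbar ^ 2 / (2 * m)) * lap (fun y => Real.sqrt (ρ₁ y)) x
            / Real.sqrt (ρ₁ x))
          + ρ₂ x * (-(hbar ^ 2 / (2 * m)) * lap (fun y => Real.sqrt (ρ₂ y)) x
            / Real.sqrt (ρ₂ x))
        = -(hbar ^ 2 / (2 * m)) * Real.sqrt (ρ x) * lap (fun y => Real.sqrt (ρ y)) x
          + hbar ^ 2 / (8 * m) * ρ x * ∑ i, (pd i η x) ^ 2) :=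
  quantum_potential_sum_general Ω hΩ ρ η hρ hρpos hη hηval hbar m ρ₁ ρ₂ hρ₁ hρ₂

end
end
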